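/- If B is a random infinite cycle, then for each n ≥ 3 the cycle B_n is uniformly distributed on the set of all cycles with node set {1,…,n}; that is, the pushforward under c ↦ B_n(c) of the product of uniform measures is the uniform measure on cycles with node set {1,…,n}. -/

import Mathlib

open MeasureTheory

/-- An infinite cycle: coordinate `i` represents the choice `c_{i+3} ∈ {1,…,i+3}`
(encoded as `Fin (i+3)`, with value `v` representing `v+1`). -/
abbrev InfCycle := ∀ i : ℕ, Fin (i + 3)

/-- The list of nodes of the cycle `A_n`, in positive direction starting at node 1.
`A_{n+1}` arises from `A_n` by inserting node `n+1` into the `c_n`-th edge. -/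
def listOf (c : InfCycle) : ℕ → List ℕ
  | 0 => []
  | 1 => []
  | 2 => []
  | 3 => [1, 2, 3]
  | (n + 4) => (listOf c (n + 3)).insertIdx ((c n).val + 1) (n + 4)

/-- The node following `x` in the cyclic order given by the list `l`. -/
def cyclicNext (l : List ℕ) (x : ℕ) : ℕ := (l.rotate 1).getD (l.idxOf x) 0

/-- The node preceding `x` in the cyclic order given by the list `l`. -/
def cyclicPrev (l : List ℕ) (x : ℕ) : ℕ := (l.rotate (l.length - 1)).getD (l.idxOf x) 0

/-- `ν⁺_A(k)`: the neighbor of `k` in `A_k` in positive direction. -/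
def nuPlus (c : InfCycle) (k : ℕ) : ℕ :=
  if k ≤ 1 then 0 else if k = 2 then 1 else cyclicNext (listOf c k) k

/-- `ν⁻_A(k)`: the neighbor of `k` in `A_k` in negative direction. -/
def nuMinus (c : InfCycle) (k : ℕ) : ℕ :=
  if k ≤ 1 then 0 else if k = 2 then 1 else cyclicPrev (listOf c k) k

/-- `ν_A(k) = {ν⁺_A(k), ν⁻_A(k)}`, the edge of `A_{k-1}` into which `k` was inserted. -/
def nuSet (c : InfCycle) (k : ℕ) : Finset ℕ := {nuPlus c k, nuMinus c k}

/-- The edges (as unordered pairs) of the cycle whose nodes, in cyclic order, are `l`. -/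
def edgeList (l : List ℕ) : List (Finset ℕ) :=
  l.zipWith (fun x y => ({x, y} : Finset ℕ)) (l.rotate 1)

/-- `E(A_n)`: the edge set of the cycle `A_n`. -/
def cycleEdges (c : InfCycle) (n : ℕ) : Finset (Finset ℕ) := (edgeList (listOf c n)).toFinset

/-- `k` is a vertex of the pedigree graph `G_n^{AB}`. -/
def isVertex (a b : InfCycle) (n k : ℕ) : Prop := 4 ≤ k ∧ k ≤ n ∧ nuSet a k ≠ nuSet b k

/-- The condition for an edge of the pedigree graph between vertices `k < m`
(type-1 A→B, type-1 B→A, type-2 A→B, type-2 B→A). -/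
def edgeCond (a b : InfCycle) (k m : ℕ) : Prop :=
  nuSet a m = nuSet b k ∨ nuSet b m = nuSet a k ∨
  (k = max (nuPlus a m) (nuMinus a m) ∧ nuSet b k ∩ nuSet a m = ∅) ∨
  (k = max (nuPlus b m) (nuMinus b m) ∧ nuSet a k ∩ nuSet b m = ∅)

/-- The pedigree graph `G_n^{AB}`, as a graph on `ℕ` (non-vertices are isolated). -/
def pedigreeGraph (a b : InfCycle) (n : ℕ) : SimpleGraph ℕ where
  Adj k m := isVertex a b n k ∧ isVertex a b n m ∧
    ((k < m ∧ edgeCond a b k m) ∨ (m < k ∧ edgeCond a b m k))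
  symm := ⟨fun k m ⟨h1, h2, h3⟩ => ⟨h2, h1, h3.symm⟩⟩
  loopless := ⟨fun k h => by rcases h.2.2 with ⟨h', _⟩ | ⟨h', _⟩ <;> exact absurd h' (lt_irrefl k)⟩

/-- The vertex set of the pedigree graph `G_n^{AB}`. -/
def vertexSet (a b : InfCycle) (n : ℕ) : Set ℕ := {k | isVertex a b n k}

/-- The pedigree graph `G_n^{AB}` on its vertex set. -/
def pGraph (a b : InfCycle) (n : ℕ) : SimpleGraph (vertexSet a b n) :=
  (pedigreeGraph a b n).induce (vertexSet a b n)

/-- The pedigree graph `G_n^{AB}` is connected. -/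
def pConnected (a b : InfCycle) (n : ℕ) : Prop := (pGraph a b n).Connected

/-- `T_n`: the number of connected components of the pedigree graph `G_n^{AB}`. -/
noncomputable def Tnum (a b : InfCycle) (n : ℕ) : ℕ :=
  Nat.card (pGraph a b n).ConnectedComponent

/-- `I_n`: at time `n`, the node `n` is added to the pedigree graph as an isolated vertex. -/
def isolatedAt (a b : InfCycle) (n : ℕ) : Prop :=
  isVertex a b n n ∧ ∀ k, ¬ (pedigreeGraph a b n).Adj n k

/-- The event that the first `m` coordinates (`c_3, …, c_{m+2}`) agree with those of `b₀`. -/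
def prefixEvent (b₀ : InfCycle) (m : ℕ) : Set InfCycle := {b | ∀ j, j < m → b j = b₀ j}

/-- `μ` is the distribution of a random infinite cycle: the product over `n ≥ 3` of the
uniform measures on `{1,…,n}`.  (This property determines `μ` uniquely.) -/
def IsCycleMeasure (μ : Measure InfCycle) : Prop :=
  IsProbabilityMeasure μ ∧
    ∀ (b₀ : InfCycle) (m : ℕ),
      μ (prefixEvent b₀ m) = ∏ j ∈ Finset.range m, ((j + 3 : ℕ) : ENNReal)⁻¹

/-- An Alice strategy: her choice at each time depends only on Bob's earlier choices. -/
structure AliceStrategy where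
  play : InfCycle → InfCycle
  adapted : ∀ (b b' : InfCycle) (i : ℕ), (∀ j, j < i → b j = b' j) → play b i = play b' i

/-- `S_n = |E(A_n) ∩ E(B_n)|`. -/
def Sval (a b : InfCycle) (n : ℕ) : ℕ := (cycleEdges a n ∩ cycleEdges b n).card

/-- `S*_n`: the number of common edges not incident on `ν_A(n+1)`. -/
def Sstar (a b : InfCycle) (n : ℕ) : ℕ :=
  ((cycleEdges a n ∩ cycleEdges b n).filter (fun e => e ∩ nuSet a (n + 1) = ∅)).card

/-- `R_n`: the number of edges of `B_n` that are not common and not incident on `ν_A(n+1)`. -/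
def Rval (a b : InfCycle) (n : ℕ) : ℕ :=
  ((cycleEdges b n \ cycleEdges a n).filter (fun e => e ∩ nuSet a (n + 1) = ∅)).card

/-- Alice's move at time `m` is a d-move: `ν_A(m) ∉ E^∩_{m-1}`. -/
def dMoveAt (a b : InfCycle) (m : ℕ) : Prop := nuSet a m ∉ cycleEdges b (m - 1)

/-- `Y`: the total number of times an isolated vertex is created in the pedigree graph. -/
noncomputable def Yval (a b : InfCycle) : ENNReal :=
  ∑' m : ℕ, Set.indicator {x : ℕ | isolatedAt a b x} (fun _ => 1) m

/-- Extend a finite sequence of choices `c_3, …, c_{m+2}` to an infinite cycle (padding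
with arbitrary later choices; the cycle `A_{m+3}` depends only on the given choices). -/
def extendPrefix {m : ℕ} (p : ∀ j : Fin m, Fin ((j : ℕ) + 3)) : InfCycle :=
  fun i => if h : i < m then p ⟨i, h⟩ else ⟨0, by omega⟩

/-- `E` is the edge set of an (undirected Hamiltonian) cycle with node set `{1, …, n}`:
it consists of the consecutive unordered pairs of some cyclic arrangement of `1, …, n`. -/
def IsHamCycle (n : ℕ) (E : Finset (Finset ℕ)) : Prop :=
  ∃ l : List ℕ, l.Perm (List.range' 1 n) ∧ E = (edgeList l).toFinset

/-! The choices `c_3, …, c_{n-1}` can be read off the edge set of `B_n`: contracting the largest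
node `n` of `B_n` gives the edge set of `B_{n-1}`, and the two neighbours of `n` identify the edge
of `B_{n-1}` it was inserted into, hence `c_{n-1}`. Conversely every cycle on `{1, …, n}` arises:
list it from node `1` in the direction in which `2` precedes `3`, and delete `n, n-1, …, 4` in
turn. So `{B_n = E}` is the cylinder event fixing `c_3, …, c_{n-1}`, of probability
`∏_{j=3}^{n-1} 1/j = 2/(n-1)!`. -/

open List

namespace List

variable {α : Type*}

theorem insertIdx_eq_take_append_drop (x : α) :
    ∀ (l : List α) (i : ℕ), i ≤ l.length → l.insertIdx i x = l.take i ++ x :: l.drop i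
  | _, 0, _ => rfl
  | a :: l, i + 1, h => by
    rw [insertIdx_succ_cons, l.insertIdx_eq_take_append_drop x i (by simpa using h)]
    rfl

theorem pair_sublist_or_pair_sublist {a b : α} {l : List α}
    (ha : a ∈ l) (hb : b ∈ l) (hab : a ≠ b) : [a, b] <+ l ∨ [b, a] <+ l := by
  obtain ⟨s, r, rfl⟩ := append_of_mem ha
  rcases mem_append.1 hb with hbs | hbr
  · exact .inr (Sublist.append (singleton_sublist.2 hbs) (singleton_sublist.2 mem_cons_self))
  · have hbr : b ∈ r := (mem_cons.1 hbr).resolve_left hab.symm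
    exact .inl ((singleton_sublist.2 hbr).cons_cons a |>.trans (sublist_append_right s _))

theorem insertIdx_idxOf_erase [BEq α] [LawfulBEq α] {l : List α} {x : α}
    (hx : x ∈ l) : (l.erase x).insertIdx (l.idxOf x) x = l := by
  have := insertIdx_eraseIdx_getElem (idxOf_lt_length_iff.2 hx)
  rwa [getElem_idxOf, ← erase_eq_eraseIdx_of_idxOf rfl] at this

theorem Nodup.pair_getElem_mod_injective [DecidableEq α] {L : List α}
    (hL : L.Nodup) (h3 : 3 ≤ L.length) {i j : ℕ} (hi : i < L.length) (hj : j < L.length)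
    (h : ({L[i], L[(i + 1) % L.length]'(Nat.mod_lt _ (by omega))} : Finset α) =
      {L[j], L[(j + 1) % L.length]'(Nat.mod_lt _ (by omega))}) : i = j := by
  have hidx : ∀ {a} (ha : a < L.length),
      L[a] ∈ ({L[j], L[(j + 1) % L.length]'(Nat.mod_lt _ (by omega))} : Finset α) →
        a = j ∨ a = (j + 1) % L.length := by
    intro a ha hmem
    simp only [Finset.mem_insert, Finset.mem_singleton] at hmem
    exact hmem.imp hL.getElem_inj_iff.1 hL.getElem_inj_iff.1
  have e1 := hidx hi (by rw [← h]; simp)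
  have e2 := hidx (Nat.mod_lt (i + 1) (by omega)) (by rw [← h]; simp)
  have hsucc : ∀ k < L.length,
      (k + 1) % L.length = k + 1 ∨ (k + 1 = L.length ∧ (k + 1) % L.length = 0) :=
    fun k hk => (Nat.lt_or_eq_of_le hk).imp (Nat.mod_eq_of_lt ·) fun hk => ⟨hk, hk ▸ Nat.mod_self _⟩
  -- the crossed matching `i ≡ j + 1`, `j ≡ i + 1` (mod `L.length`) would force `L.length ∣ 2`
  rcases hsucc i hi with hs | hs <;> rcases hsucc j hj with ht | ht <;> omega

end List

section Splice

variable {α : Type*} [DecidableEq α] {x z h : α} {P : Finset (Finset α)}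

theorem pair_mem_insert_insert_iff (hP : ∀ e ∈ P, x ∉ e) (hz : z ≠ x) (hh : h ≠ x) (v : α) :
    {v, x} ∈ insert {z, x} (insert {x, h} P) ↔ v = z ∨ v = h := by
  have hvx : ({v, x} : Finset α) ∉ P := fun hv => hP _ hv (by simp)
  rw [Finset.mem_insert, Finset.mem_insert, Finset.pair_comm x h, or_iff_left hvx]
  by_cases hv : v = x
  · subst hv
    simp [Finset.ext_iff, hz, hh, hz.symm, hh.symm]
  · have hv : v ∉ ({x} : Finset α) := by simpa using hv
    rw [Finset.insert_inj hv, Finset.insert_inj hv]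

theorem filter_not_mem_insert_insert (hP : ∀ e ∈ P, x ∉ e) :
    (insert {z, x} (insert {x, h} P)).filter (x ∉ ·) = P := by
  rw [Finset.filter_insert, Finset.filter_insert, Finset.filter_true_of_mem hP]
  simp

theorem eq_and_pair_eq_of_insert_insert_eq {z' h' : α} {P' : Finset (Finset α)}
    (hP : ∀ e ∈ P, x ∉ e) (hz : z ≠ x) (hh : h ≠ x)
    (hP' : ∀ e ∈ P', x ∉ e) (hz' : z' ≠ x) (hh' : h' ≠ x)
    (heq : insert {z, x} (insert {x, h} P) = insert {z', x} (insert {x, h'} P')) :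
    P = P' ∧ ({z, h} : Finset α) = {z', h'} := by
  refine ⟨by rw [← filter_not_mem_insert_insert hP, ← filter_not_mem_insert_insert hP', heq], ?_⟩
  ext v
  simp [← pair_mem_insert_insert_iff hP hz hh, ← pair_mem_insert_insert_iff hP' hz' hh', heq]

end Splice

section PathEdges

variable {α : Type*} [DecidableEq α]

def pathEdges : List α → List (Finset α)
  | [] => []
  | [_] => []
  | a :: b :: t => {a, b} :: pathEdges (b :: t)

@[simp] theorem pathEdges_nil : pathEdges ([] : List α) = [] := rfl

@[simp] theorem pathEdges_singleton (a : α) : pathEdges [a] = [] := rfl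

@[simp] theorem pathEdges_cons_cons (a b : α) (t : List α) :
    pathEdges (a :: b :: t) = {a, b} :: pathEdges (b :: t) := rfl

theorem pathEdges_append_cons (s : List α) (p : α) (t : List α) :
    pathEdges (s ++ p :: t) = pathEdges (s ++ [p]) ++ pathEdges (p :: t) := by
  induction s with
  | nil => cases t <;> simp
  | cons a s ih => cases s <;> cases t <;> simp_all

theorem pathEdges_concat (l : List α) (hl : l ≠ []) (y : α) :
    pathEdges (l ++ [y]) = pathEdges l ++ [{l.getLast hl, y}] := by
  conv_lhs => rw [← dropLast_append_getLast hl, append_assoc, singleton_append,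
    pathEdges_append_cons, dropLast_append_getLast hl]
  simp

theorem pathEdges_reverse : ∀ l : List α, pathEdges l.reverse = (pathEdges l).reverse
  | [] => rfl
  | [_] => rfl
  | a :: b :: t => by
    rw [reverse_cons, reverse_cons, append_assoc, singleton_append, pathEdges_append_cons,
      ← reverse_cons, pathEdges_reverse (b :: t)]
    simp [Finset.pair_comm]

theorem mem_of_mem_of_mem_pathEdges {l : List α} {e : Finset α} {v : α}
    (he : e ∈ pathEdges l) (hv : v ∈ e) : v ∈ l := by
  induction l using pathEdges.induct with
  | case1 | case2 => simp at he
  | case3 a b t ih =>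
    rcases mem_cons.1 he with rfl | he
    · rcases Finset.mem_insert.1 hv with rfl | hv
      · exact mem_cons_self
      · exact mem_cons_of_mem _ (Finset.mem_singleton.1 hv ▸ mem_cons_self)
    · exact mem_cons_of_mem _ (ih he)

theorem pathEdges_cons_append_singleton (t : List α) (a c : α) :
    pathEdges (a :: (t ++ [c])) =
      zipWith (fun x y => ({x, y} : Finset α)) (a :: t) (t ++ [c]) := by
  induction t generalizing a with
  | nil => simp
  | cons b t ih => simp [ih b]

end PathEdges

theorem edgeList_cons (a : ℕ) (t : List ℕ) :
    edgeList (a :: t) = pathEdges (a :: t ++ [a]) := by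
  rw [edgeList, rotate_cons_succ, rotate_zero, cons_append]
  exact (pathEdges_cons_append_singleton t a a).symm

theorem edgeList_rotate (l : List ℕ) (k : ℕ) :
    edgeList (l.rotate k) = (edgeList l).rotate k := by
  rw [edgeList, edgeList, zipWith_rotate_distrib _ _ _ _ (length_rotate ..).symm,
    rotate_rotate, rotate_rotate, Nat.add_comm]

theorem toFinset_edgeList_rotate (l : List ℕ) (k : ℕ) :
    (edgeList (l.rotate k)).toFinset = (edgeList l).toFinset := by
  rw [edgeList_rotate, toFinset_eq_of_perm _ _ (rotate_perm _ _)]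

theorem toFinset_edgeList_reverse (l : List ℕ) :
    (edgeList l.reverse).toFinset = (edgeList l).toFinset := by
  cases l with
  | nil => rfl
  | cons a w =>
    have hrot : (a :: w).reverse = (a :: w.reverse).rotate 1 := by simp
    rw [hrot, toFinset_edgeList_rotate, edgeList_cons, edgeList_cons,
      show a :: w.reverse ++ [a] = (a :: w ++ [a]).reverse by simp, pathEdges_reverse,
      toFinset_reverse]

theorem edgeList_cons_eq_concat (a : ℕ) (t : List ℕ) :
    edgeList (a :: t) = pathEdges (a :: t) ++ [{(a :: t).getLast (cons_ne_nil a t), a}] := by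
  rw [edgeList_cons, pathEdges_concat]

theorem toFinset_edgeList_insertIdx {L : List ℕ} {x i : ℕ} (hx : x ∉ L) (hi : i < L.length) :
    ∃ P : Finset (Finset ℕ), (∀ e ∈ P, x ∉ e) ∧
      (edgeList L).toFinset = insert {L[i], L[(i + 1) % L.length]'(Nat.mod_lt _ (by omega))} P ∧
      (edgeList (L.insertIdx (i + 1) x)).toFinset =
        insert {L[i], x} (insert {x, L[(i + 1) % L.length]'(Nat.mod_lt _ (by omega))} P) := by
  -- rotating by `i + 1` turns the split edge into the closing edge and puts `x` in front
  obtain ⟨h, M, hM⟩ : ∃ h M, L.rotate (i + 1) = h :: M :=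
    exists_cons_of_ne_nil (by simpa [← length_pos_iff] using Nat.zero_lt_of_lt hi)
  have hhead : L[(i + 1) % L.length]'(Nat.mod_lt _ (by omega)) = h := by
    have := getElem_rotate L (i + 1) 0 (by simp; omega)
    simp only [hM, getElem_cons_zero, Nat.zero_add] at this
    exact this.symm
  have hlast : L[i] = (h :: M).getLast (cons_ne_nil h M) := by
    rw [getLast_eq_getElem]
    simp only [← hM, getElem_rotate, length_rotate,
      show L.length - 1 + (i + 1) = i + L.length by omega, Nat.add_mod_right, Nat.mod_eq_of_lt hi]
  have hins : (L.insertIdx (i + 1) x).rotate (i + 1) = x :: h :: M := by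
    have := rotate_append_length_eq (L.take (i + 1)) (x :: L.drop (i + 1))
    rw [length_take_of_le hi, cons_append, ← rotate_eq_drop_append_take hi, hM] at this
    rw [insertIdx_eq_take_append_drop x L (i + 1) hi, this]
  refine ⟨(pathEdges (h :: M)).toFinset, fun e he hxe => hx ?_, ?_, ?_⟩
  · exact (rotate_perm L (i + 1)).mem_iff.1
      (hM ▸ mem_of_mem_of_mem_pathEdges (mem_toFinset.1 he) hxe)
  · rw [← toFinset_edgeList_rotate L (i + 1), hM, edgeList_cons_eq_concat, hhead, hlast,
      toFinset_append, toFinset_cons, toFinset_nil, Finset.union_comm]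
    rfl
  · rw [← toFinset_edgeList_rotate _ (i + 1), hins, edgeList_cons_eq_concat, hhead, hlast,
      getLast_cons (cons_ne_nil h M), pathEdges_cons_cons]
    ext e
    simp only [cons_append, toFinset_cons, toFinset_append, Finset.mem_insert, Finset.mem_union,
      mem_toFinset]
    tauto

section ListOf

variable (c : InfCycle)

theorem listOf_succ (n : ℕ) :
    listOf c (n + 4) = (listOf c (n + 3)).insertIdx ((c n).val + 1) (n + 4) := rfl

theorem listOf_perm : ∀ n : ℕ, listOf c (n + 3) ~ range' 1 (n + 3)
  | 0 => .refl _
  | n + 1 => by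
    rw [listOf_succ, range'_concat, show 1 + 1 * (n + 3) = n + 4 by omega]
    exact (perm_insertIdx _ _ (by simp [(listOf_perm n).length_eq]; omega)).trans
      (((listOf_perm n).cons _).trans (perm_append_singleton _ _).symm)

theorem length_listOf (n : ℕ) : (listOf c (n + 3)).length = n + 3 := by
  simp [(listOf_perm c n).length_eq]

theorem nodup_listOf (n : ℕ) : (listOf c (n + 3)).Nodup :=
  (listOf_perm c n).nodup_iff.2 nodup_range'

theorem mem_listOf {n v : ℕ} : v ∈ listOf c (n + 3) ↔ 1 ≤ v ∧ v < n + 4 := by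
  rw [(listOf_perm c n).mem_iff, mem_range'_1]
  omega

end ListOf

theorem listOf_congr {b b' : InfCycle} :
    ∀ {n : ℕ}, (∀ j < n, b j = b' j) → listOf b (n + 3) = listOf b' (n + 3)
  | 0, _ => rfl
  | n + 1, h => by
    rw [listOf_succ, listOf_succ, listOf_congr fun j hj => h j (by omega), h n (by omega)]

theorem prefix_eq_of_cycleEdges_eq :
    ∀ {k : ℕ} {b b' : InfCycle},
      cycleEdges b (k + 3) = cycleEdges b' (k + 3) → ∀ j < k, b j = b' j
  | 0, _, _, _ => by simp
  | k + 1, b, b', hE => by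
    obtain ⟨L, hL⟩ : ∃ L, listOf b (k + 3) = L := ⟨_, rfl⟩
    obtain ⟨L', hL'⟩ : ∃ L', listOf b' (k + 3) = L' := ⟨_, rfl⟩
    have hlen : L.length = k + 3 := hL ▸ length_listOf b k
    have hlen' : L'.length = k + 3 := hL' ▸ length_listOf b' k
    have hx : k + 4 ∉ L := hL ▸ fun h => by simp [mem_listOf] at h
    have hx' : k + 4 ∉ L' := hL' ▸ fun h => by simp [mem_listOf] at h
    obtain ⟨P, hP, hLP, hLP'⟩ := toFinset_edgeList_insertIdx hx (i := b k) (by omega)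
    obtain ⟨P', hP', hL'P, hL'P'⟩ := toFinset_edgeList_insertIdx hx' (i := b' k) (by omega)
    have hne : ∀ {M : List ℕ} (hM : k + 4 ∉ M) (i) (hi : i < M.length), M[i] ≠ k + 4 :=
      fun hM _ hi h => hM (h ▸ getElem_mem hi)
    simp only [cycleEdges, listOf_succ, hL, hL', hLP', hL'P'] at hE
    obtain ⟨hPP, hpair⟩ := eq_and_pair_eq_of_insert_insert_eq hP (hne hx _ _) (hne hx _ _)
      hP' (hne hx' _ _) (hne hx' _ _) hE
    have hpre := prefix_eq_of_cycleEdges_eq (b := b) (b' := b') (k := k) <| by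
      rw [cycleEdges, cycleEdges, hL, hL', hLP, hL'P, hPP, hpair]
    obtain rfl : L = L' := hL ▸ hL' ▸ listOf_congr hpre
    have hk : (b k).val = (b' k).val :=
      (hL ▸ nodup_listOf b k).pair_getElem_mod_injective (by omega) _ _ hpair
    intro j hj
    rcases Nat.lt_succ_iff_lt_or_eq.1 hj with hj | rfl
    · exact hpre j hj
    · exact Fin.ext hk

theorem exists_listOf_eq_cons :
    ∀ {k : ℕ} {t : List ℕ}, 1 :: t ~ range' 1 (k + 3) → [2, 3] <+ t →
      ∃ b : InfCycle, listOf b (k + 3) = 1 :: t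
  | 0, t, hperm, h23 => ⟨fun _ => 0, by
      rw [← h23.eq_of_length (perm_cons 1 |>.1 hperm).length_eq.symm]; rfl⟩
  | k + 1, t, hperm, h23 => by
    have hxt : k + 4 ∈ t :=
      (mem_cons.1 (hperm.mem_iff.2 (by simp [mem_range'_1]))).resolve_left (by omega)
    have hidx : t.idxOf (k + 4) < k + 3 := by
      have hlen : t.length = k + 3 := by simpa using hperm.length_eq
      exact hlen ▸ idxOf_lt_length_iff.2 hxt
    have hperm' : 1 :: t.erase (k + 4) ~ range' 1 (k + 3) := by
      have := hperm.erase (k + 4)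
      rwa [erase_cons_tail (by simp), range'_concat, show 1 + 1 * (k + 3) = k + 4 by omega,
        erase_append_right _ (by simp [mem_range'_1]; omega), erase_cons_head, append_nil] at this
    obtain ⟨b, hb⟩ := exists_listOf_eq_cons hperm' (by simpa using h23.erase (k + 4))
    refine ⟨Function.update b k ⟨t.idxOf (k + 4), hidx⟩, ?_⟩
    rw [listOf_succ, listOf_congr (b' := b) fun j hj => Function.update_of_ne hj.ne _ _, hb,
      Function.update_self, insertIdx_succ_cons, insertIdx_idxOf_erase hxt]

theorem exists_cons_perm_edgeList {k : ℕ} {l : List ℕ} (hl : l ~ range' 1 (k + 3)) :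
    ∃ t, 1 :: t ~ range' 1 (k + 3) ∧ [2, 3] <+ t ∧
      (edgeList (1 :: t)).toFinset = (edgeList l).toFinset := by
  obtain ⟨u, v, rfl⟩ := append_of_mem (hl.mem_iff.2 (by simp [mem_range'_1]) : 1 ∈ l)
  have hrot : (u ++ 1 :: v).rotate u.length = 1 :: (v ++ u) := rotate_append_length_eq _ _
  have hw : 1 :: (v ++ u) ~ range' 1 (k + 3) := hrot ▸ (rotate_perm _ _).trans hl
  have hE := hrot ▸ toFinset_edgeList_rotate (u ++ 1 :: v) u.length
  have hmem : ∀ a, 2 ≤ a → a ≤ 3 → a ∈ v ++ u := fun a h2 h3 =>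
    (mem_cons.1 (hw.mem_iff.2 (by simp [mem_range'_1]; omega))).resolve_left (by omega)
  rcases pair_sublist_or_pair_sublist (hmem 2 le_rfl (by omega)) (hmem 3 (by omega) le_rfl)
    (by omega) with h | h
  · exact ⟨v ++ u, hw, h, hE⟩
  · refine ⟨(v ++ u).reverse, ((reverse_perm _).cons 1).trans hw,
      by simpa using reverse_sublist.2 h, ?_⟩
    rw [← hE, ← reverse_concat', toFinset_edgeList_reverse,
      show v ++ u ++ [1] = (1 :: (v ++ u)).rotate 1 by simp, toFinset_edgeList_rotate]

theorem exists_cycleEdges_eq {k : ℕ} {E : Finset (Finset ℕ)} (hE : IsHamCycle (k + 3) E) :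
    ∃ b : InfCycle, cycleEdges b (k + 3) = E := by
  obtain ⟨l, hl, rfl⟩ := hE
  obtain ⟨t, ht, h23, hedges⟩ := exists_cons_perm_edgeList hl
  obtain ⟨b, hb⟩ := exists_listOf_eq_cons ht h23
  exact ⟨b, by rw [cycleEdges, hb, hedges]⟩

theorem cycleEdges_eq_cycleEdges_iff {k : ℕ} {b b₀ : InfCycle} :
    cycleEdges b (k + 3) = cycleEdges b₀ (k + 3) ↔ b ∈ prefixEvent b₀ k :=
  ⟨prefix_eq_of_cycleEdges_eq, fun h => by rw [cycleEdges, cycleEdges, listOf_congr h]⟩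

open scoped ENNReal Nat in
theorem prod_range_inv_natCast_add_three (k : ℕ) :
    ∏ j ∈ Finset.range k, ((j + 3 : ℕ) : ℝ≥0∞)⁻¹ = (((k + 2)! / 2 : ℕ) : ℝ≥0∞)⁻¹ := by
  rw [← ENNReal.prod_inv_distrib fun _ _ _ _ _ => .inr (ENNReal.natCast_ne_top _),
    ← Nat.cast_prod,
    show (k + 2)! / 2 = (2 + 1).ascFactorial k by rw [Nat.ascFactorial_eq_div, Nat.add_comm]; rfl,
    Nat.ascFactorial_eq_prod_range]
  simp only [Nat.add_comm 3, Nat.reduceAdd]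

/-- If `B` is a random infinite cycle then `B_n` is uniformly
distributed on the set of cycles with node set `{1,…,n}`: every such cycle is attained
with probability `1/((n-1)!/2)`. -/
theorem random_cycle_uniform
    (μ : Measure InfCycle) (hμ : IsCycleMeasure μ) (n : ℕ) (hn : 3 ≤ n)
    (E : Finset (Finset ℕ)) (hE : IsHamCycle n E) :
    μ {b : InfCycle | cycleEdges b n = E} = (((n - 1).factorial / 2 : ℕ) : ENNReal)⁻¹ := by
  obtain ⟨k, rfl⟩ : ∃ k, n = k + 3 := ⟨n - 3, by omega⟩
  obtain ⟨b₀, rfl⟩ := exists_cycleEdges_eq hE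
  have hevent : {b | cycleEdges b (k + 3) = cycleEdges b₀ (k + 3)} = prefixEvent b₀ k :=
    Set.ext fun _ => cycleEdges_eq_cycleEdges_iff
  rw [hevent, hμ.2, prod_range_inv_natCast_add_three]
  rfl
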